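/- If M ≤_K N are models in K_λ, p ∈ S(M) is a λ-unique type, and q ∈ S(N) extends p and has the λ-extension property, then q is a λ-unique type over N. -/

import Mathlib

/-!
A lightweight formalization of abstract elementary classes (AECs) whose models
are structures living on subsets of a fixed ambient type `U`, together with
Galois types defined, as in the paper, via the equivalence relation generated
by the atomic relation `E_at`.
-/

universe u

open FirstOrder Cardinal Set

/-- An `L`-structure whose carrier is a subset of the ambient type `U`. -/
structure ModelOn (L : FirstOrder.Language.{u, u}) (U : Type u) where
  carrier : Set U
  str : L.Structure carrier

attribute [instance] ModelOn.str

variable {L : FirstOrder.Language.{u, u}} {U : Type u}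

/-- An abstract elementary class: a class `Mem` of structures on subsets of `U`
together with a strong substructure relation `le`, satisfying the AEC axioms. -/
structure AEC (L : FirstOrder.Language.{u, u}) (U : Type u) where
  /-- membership in the class -/
  Mem : ModelOn L U → Prop
  /-- the strong substructure relation `≤_𝐊` -/
  le : ModelOn L U → ModelOn L U → Prop
  /-- the Löwenheim–Skolem–Tarski number -/
  LS : Cardinal.{u}
  LS_inf : ℵ₀ ≤ LS
  le_mem_left : ∀ {M N}, le M N → Mem M
  le_mem_right : ∀ {M N}, le M N → Mem N
  le_refl : ∀ {M}, Mem M → le M M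
  le_trans : ∀ {M N P}, le M N → le N P → le M P
  subset_of_le : ∀ {M N}, le M N → M.carrier ⊆ N.carrier
  /-- `≤_𝐊` extends the substructure relation: the inclusion is an `L`-embedding. -/
  substructure_of_le : ∀ {M N} (_ : le M N),
    ∃ f : M.carrier ↪[L] N.carrier, ∀ x : M.carrier, (f x : U) = (x : U)
  /-- coherence -/
  coherence : ∀ {M N P}, le M P → le N P → M.carrier ⊆ N.carrier → le M N
  /-- closure under isomorphism (within the ambient type) -/
  iso_closed : ∀ {M N : ModelOn L U}, Mem M → Nonempty (M.carrier ≃[L] N.carrier) → Mem N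
  /-- Tarski–Vaught: closure under unions of chains -/
  union_closed : ∀ {ι : Type u}, Nonempty ι → ∀ Mc : ι → ModelOn L U,
    (∀ i, Mem (Mc i)) → (∀ i j, le (Mc i) (Mc j) ∨ le (Mc j) (Mc i)) →
    ∃ Mu, Mem Mu ∧ Mu.carrier = ⋃ i, (Mc i).carrier ∧ ∀ i, le (Mc i) Mu
  /-- the Löwenheim–Skolem–Tarski axiom -/
  ls_axiom : ∀ N, Mem N → ∀ A : Set U, A ⊆ N.carrier →
    ∃ M, le M N ∧ A ⊆ M.carrier ∧ #(M.carrier) ≤ LS + #A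

namespace AEC

variable (K : AEC L U)

/-- `f` is a `𝐊`-embedding: an isomorphism onto a strong submodel of `N`. -/
def IsKEmb (M N : ModelOn L U) (f : M.carrier ↪[L] N.carrier) : Prop :=
  ∃ M', K.le M' N ∧ (Set.range fun x : M.carrier => (f x : U)) = M'.carrier

/-- A triple `(b, A, N)` with `N ∈ 𝐊`, `A ⊆ |N|` and `b ∈ N`, used to define Galois types. -/
structure Triple (K : AEC L U) where
  N : ModelOn L U
  mem : K.Mem N
  A : Set U
  hA : A ⊆ N.carrier
  b : U
  hb : b ∈ N.carrier

/-- The atomic relation `E_at` on triples. -/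
def EAt (t₁ t₂ : K.Triple) : Prop :=
  t₁.A = t₂.A ∧
  ∃ (N : ModelOn L U) (_ : K.Mem N)
    (f₁ : t₁.N.carrier ↪[L] N.carrier) (f₂ : t₂.N.carrier ↪[L] N.carrier),
    K.IsKEmb _ _ f₁ ∧ K.IsKEmb _ _ f₂ ∧
    (f₁ ⟨t₁.b, t₁.hb⟩ : U) = (f₂ ⟨t₂.b, t₂.hb⟩ : U) ∧
    ∀ a (h₁ : a ∈ t₁.A) (h₂ : a ∈ t₂.A),
      (f₁ ⟨a, t₁.hA h₁⟩ : U) = (f₂ ⟨a, t₂.hA h₂⟩ : U)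

/-- Galois types: triples modulo the equivalence relation generated by `E_at`. -/
def GType (K : AEC L U) := Quotient (Relation.EqvGen.setoid K.EAt)

/-- The Galois type of a triple. -/
def gtp (t : K.Triple) : K.GType := Quotient.mk _ t

variable {K}

/-- Restriction of a triple to (the part of its domain lying in) a set `C`. -/
def Triple.restrict (t : K.Triple) (C : Set U) : K.Triple :=
  { t with A := t.A ∩ C, hA := fun _ h => t.hA h.1 }

theorem EAt.restrict {t₁ t₂ : K.Triple} (h : K.EAt t₁ t₂) (C : Set U) :
    K.EAt (t₁.restrict C) (t₂.restrict C) := by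
  obtain ⟨hA, N, hN, f₁, f₂, hk₁, hk₂, hb, hag⟩ := h
  refine ⟨by simp only [Triple.restrict, hA], N, hN, f₁, f₂, hk₁, hk₂, hb, ?_⟩
  intro a h₁ h₂
  exact hag a h₁.1 h₂.1

/-- Restriction of a Galois type to a set `C`. -/
def GType.restrict (p : K.GType) (C : Set U) : K.GType :=
  Quotient.map (fun t => t.restrict C)
    (fun _ _ h => by
      induction h with
      | rel x y h => exact Relation.EqvGen.rel _ _ (EAt.restrict h C)
      | refl x => exact Relation.EqvGen.refl _
      | symm x y _ ih => exact Relation.EqvGen.symm _ _ ih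
      | trans x y z _ _ ih₁ ih₂ => exact Relation.EqvGen.trans _ _ _ ih₁ ih₂) p

variable (K)

/-- `p ∈ 𝐒(M)`: `p` is a Galois type over `M`. -/
def IsTypeOver (M : ModelOn L U) (p : K.GType) : Prop :=
  ∃ t : K.Triple, K.gtp t = p ∧ t.A = M.carrier ∧ K.le M t.N

/-- `p ∈ 𝐒ⁿᵃ(M)`: `p` is a non-algebraic Galois type over `M`. -/
def IsNaTypeOver (M : ModelOn L U) (p : K.GType) : Prop :=
  ∃ t : K.Triple, K.gtp t = p ∧ t.A = M.carrier ∧ K.le M t.N ∧ t.b ∉ M.carrier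

/-- `b ∈ N` realizes `p` over `M ≤ N`. -/
def Realizes (M N : ModelOn L U) (h : K.le M N) (b : U) (p : K.GType) : Prop :=
  ∃ hb : b ∈ N.carrier,
    K.gtp ⟨N, K.le_mem_right h, M.carrier, K.subset_of_le h, b, hb⟩ = p

/-- The set of realizations of `p ∈ 𝐒(M)` in an extension `N` of `M`. -/
def realizSet (M N : ModelOn L U) (h : K.le M N) (p : K.GType) : Set U :=
  { b | K.Realizes M N h b p }

/-- `p` has the `λ`-extension property: it extends to a non-algebraic type over every
`λ`-sized strong extension of `M`. -/
def HasExtProp (lam : Cardinal.{u}) (M : ModelOn L U) (p : K.GType) : Prop :=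
  ∀ M', K.le M M' → #(M'.carrier) = lam →
    ∃ q, K.IsNaTypeOver M' q ∧ q.restrict M.carrier = p

/-- `p` is `λ`-algebraic: non-algebraic but without the `λ`-extension property. -/
def IsLamAlgebraic (lam : Cardinal.{u}) (M : ModelOn L U) (p : K.GType) : Prop :=
  K.IsNaTypeOver M p ∧ ¬ K.HasExtProp lam M p

/-- `𝐊` is stable in `λ`: `|𝐒(M)| ≤ λ` for every `M ∈ 𝐊_λ`. -/
def StableIn (lam : Cardinal.{u}) : Prop :=
  ∀ M, K.Mem M → #(M.carrier) = lam → #{ p : K.GType // K.IsTypeOver M p } ≤ lam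

/-- `𝐊` is stable for `λ`-algebraic types in `λ`. -/
def StableForAlg (lam : Cardinal.{u}) : Prop :=
  ∀ M, K.Mem M → #(M.carrier) = lam →
    #{ p : K.GType // K.IsLamAlgebraic lam M p } ≤ lam

/-- `𝐊` has amalgamation in `λ`. -/
def AmalgIn (lam : Cardinal.{u}) : Prop :=
  ∀ M M₁ M₂ (h₁ : K.le M M₁) (h₂ : K.le M M₂),
    #(M.carrier) = lam → #(M₁.carrier) = lam → #(M₂.carrier) = lam →
    ∃ (N : ModelOn L U) (_ : K.Mem N)
      (f₁ : M₁.carrier ↪[L] N.carrier) (f₂ : M₂.carrier ↪[L] N.carrier),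
      K.IsKEmb _ _ f₁ ∧ K.IsKEmb _ _ f₂ ∧
      ∀ x : M.carrier, (f₁ (Set.inclusion (K.subset_of_le h₁) x) : U)
        = (f₂ (Set.inclusion (K.subset_of_le h₂) x) : U)

/-- `𝐊` has the (full) amalgamation property. -/
def Amalg : Prop :=
  ∀ M M₁ M₂ (h₁ : K.le M M₁) (h₂ : K.le M M₂),
    ∃ (N : ModelOn L U) (_ : K.Mem N)
      (f₁ : M₁.carrier ↪[L] N.carrier) (f₂ : M₂.carrier ↪[L] N.carrier),
      K.IsKEmb _ _ f₁ ∧ K.IsKEmb _ _ f₂ ∧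
      ∀ x : M.carrier, (f₁ (Set.inclusion (K.subset_of_le h₁) x) : U)
        = (f₂ (Set.inclusion (K.subset_of_le h₂) x) : U)

/-- `𝐊` has disjoint amalgamation in `λ`. -/
def DisjAmalgIn (lam : Cardinal.{u}) : Prop :=
  ∀ M N₁ N₂ (h₁ : K.le M N₁) (h₂ : K.le M N₂),
    #(M.carrier) = lam → #(N₁.carrier) = lam → #(N₂.carrier) = lam →
    N₁.carrier ∩ N₂.carrier = M.carrier →
    ∃ (N : ModelOn L U) (_ : K.Mem N) (_ : #(N.carrier) = lam)
      (f₁ : N₁.carrier ↪[L] N.carrier) (f₂ : N₂.carrier ↪[L] N.carrier),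
      K.IsKEmb _ _ f₁ ∧ K.IsKEmb _ _ f₂ ∧
      (∀ x : M.carrier, (f₁ (Set.inclusion (K.subset_of_le h₁) x) : U)
        = (f₂ (Set.inclusion (K.subset_of_le h₂) x) : U)) ∧
      (Set.range fun x : N₁.carrier => (f₁ x : U)) ∩
          (Set.range fun x : N₂.carrier => (f₂ x : U))
        = Set.range fun x : M.carrier => (f₁ (Set.inclusion (K.subset_of_le h₁) x) : U)

/-- `𝐊` has no maximal model in `λ`: every `M ∈ 𝐊_λ` has a proper `≤_𝐊`-extension. -/
def NoMaxIn (lam : Cardinal.{u}) : Prop :=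
  ∀ M, K.Mem M → #(M.carrier) = lam → ∃ N, K.le M N ∧ M ≠ N

/-- `𝐊` is `(<κ, λ)`-tame. -/
def IsLtTame (κ lam : Cardinal.{u}) : Prop :=
  ∀ M, K.Mem M → #(M.carrier) = lam → ∀ p q, K.IsTypeOver M p → K.IsTypeOver M q →
    p ≠ q → ∃ A : Set U, A ⊆ M.carrier ∧ #A < κ ∧
      p.restrict A ≠ q.restrict A

/-- `𝐊` is `(κ, λ)`-tame. -/
def IsTame (κ lam : Cardinal.{u}) : Prop :=
  ∀ M, K.Mem M → #(M.carrier) = lam → ∀ p q, K.IsTypeOver M p → K.IsTypeOver M q →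
    p ≠ q → ∃ A : Set U, A ⊆ M.carrier ∧ #A ≤ κ ∧
      p.restrict A ≠ q.restrict A

/-- An increasing continuous chain of length `δ`, inside `𝐊`. -/
def IsChain (δ : Ordinal.{u}) (Mc : {i : Ordinal.{u} // i < δ} → ModelOn L U) : Prop :=
  (∀ i, K.Mem (Mc i)) ∧
  (∀ i j, i ≤ j → K.le (Mc i) (Mc j)) ∧
  (∀ i : {i : Ordinal.{u} // i < δ}, Order.IsSuccLimit (i : Ordinal) →
    (Mc i).carrier = ⋃ j : {j : Ordinal.{u} // j < δ}, ⋃ _ : (j : Ordinal) < (i : Ordinal),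
      (Mc j).carrier)

/-- `𝐊` is `(μ, λ)`-local: Galois types over `λ`-sized unions of increasing continuous
chains of length `μ` are determined by their restrictions to the members of the chain. -/
def IsLocal (μ lam : Cardinal.{u}) : Prop :=
  ∀ (Mc : {i : Ordinal.{u} // i < μ.ord} → ModelOn L U) (M : ModelOn L U),
    K.IsChain μ.ord Mc → K.Mem M → #(M.carrier) = lam →
    (∀ i, K.le (Mc i) M) → M.carrier = ⋃ i, (Mc i).carrier →
    ∀ p q, K.IsTypeOver M p → K.IsTypeOver M q →
      (∀ i, p.restrict (Mc i).carrier = q.restrict (Mc i).carrier) → p = q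

/-- `M'` is universal over `M` (among models of cardinality `λ`). -/
def IsUniversalOver (lam : Cardinal.{u}) (M M' : ModelOn L U) : Prop :=
  K.le M M' ∧ #(M'.carrier) = lam ∧
  ∀ N (hN : K.le M N), #(N.carrier) = lam →
    ∃ f : N.carrier ↪[L] M'.carrier, K.IsKEmb _ _ f ∧
      ∀ x : M.carrier, (f (Set.inclusion (K.subset_of_le hN) x) : U) = (x : U)

/-- `p` is a `λ`-unique type over `M`: it has the `λ`-extension property and at most one
extension with the `λ`-extension property over every `λ`-sized strong extension of `M`. -/
def IsLamUnique (lam : Cardinal.{u}) (M : ModelOn L U) (p : K.GType) : Prop :=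
  K.IsTypeOver M p ∧ K.HasExtProp lam M p ∧
  ∀ M', K.le M M' → #(M'.carrier) = lam →
    ∀ q₁ q₂, K.IsTypeOver M' q₁ → K.HasExtProp lam M' q₁ →
      K.IsTypeOver M' q₂ → K.HasExtProp lam M' q₂ →
      q₁.restrict M.carrier = p → q₂.restrict M.carrier = p → q₁ = q₂

/-- Coherence of a sequence of Galois types over an increasing chain indexed by `{i // i < δ}`:
there are witnesses `(aᵢ, Nᵢ)` and a commuting system of `𝐊`-embeddings `f_{i,j} : Nᵢ → Nⱼ`
fixing `Mᵢ` pointwise and sending `aᵢ` to `aⱼ`. -/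
def CoherentSeq (δ : Ordinal.{u}) (Mc : {i : Ordinal.{u} // i < δ} → ModelOn L U)
    (p : {i : Ordinal.{u} // i < δ} → K.GType) : Prop :=
  ∃ (N : {i : Ordinal.{u} // i < δ} → ModelOn L U)
    (hle : ∀ i, K.le (Mc i) (N i))
    (a : ∀ i, (N i).carrier)
    (f : ∀ i j : {i : Ordinal.{u} // i < δ}, (i : Ordinal) < (j : Ordinal) →
      ((N i).carrier ↪[L] (N j).carrier)),
    (∀ i, K.gtp ⟨N i, K.le_mem_right (hle i), (Mc i).carrier, K.subset_of_le (hle i),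
        (a i : U), (a i).2⟩ = p i) ∧
    (∀ (i j : {i : Ordinal.{u} // i < δ}) (h : (i : Ordinal) < (j : Ordinal)),
      K.IsKEmb _ _ (f i j h)) ∧
    (∀ (i j k : {i : Ordinal.{u} // i < δ}) (hij : (i : Ordinal) < (j : Ordinal))
      (hjk : (j : Ordinal) < (k : Ordinal)),
      ∀ x, f j k hjk (f i j hij x) = f i k (hij.trans hjk) x) ∧
    (∀ (i j : {i : Ordinal.{u} // i < δ}) (h : (i : Ordinal) < (j : Ordinal)),
      ∀ x : (N i).carrier, (x : U) ∈ (Mc i).carrier → (f i j h x : U) = (x : U)) ∧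
    (∀ (i j : {i : Ordinal.{u} // i < δ}) (h : (i : Ordinal) < (j : Ordinal)),
      f i j h (a i) = a j)

/-- Coherence of an `ω`-indexed sequence of Galois types over an increasing chain. -/
def NatCoherentSeq (Mc : ℕ → ModelOn L U) (p : ℕ → K.GType) : Prop :=
  ∃ (N : ℕ → ModelOn L U) (hle : ∀ i, K.le (Mc i) (N i)) (a : ∀ i, (N i).carrier)
    (f : ∀ i j : ℕ, i < j → ((N i).carrier ↪[L] (N j).carrier)),
    (∀ i, K.gtp ⟨N i, K.le_mem_right (hle i), (Mc i).carrier, K.subset_of_le (hle i),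
        (a i : U), (a i).2⟩ = p i) ∧
    (∀ i j h, K.IsKEmb _ _ (f i j h)) ∧
    (∀ i j k (hij : i < j) (hjk : j < k), ∀ x, f j k hjk (f i j hij x) = f i k (hij.trans hjk) x) ∧
    (∀ i j h, ∀ x : (N i).carrier, (x : U) ∈ (Mc i).carrier → (f i j h x : U) = (x : U)) ∧
    (∀ i j h, f i j h (a i) = a j)

end AEC

namespace AEC

variable {K : AEC L U}

theorem Triple.restrict_restrict (t : K.Triple) {A B : Set U} (hAB : A ⊆ B) :
    (t.restrict B).restrict A = t.restrict A := by
  simp only [Triple.restrict, inter_assoc, inter_eq_self_of_subset_right hAB]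

theorem GType.restrict_restrict (p : K.GType) {A B : Set U} (hAB : A ⊆ B) :
    (p.restrict B).restrict A = p.restrict A :=
  Quotient.inductionOn p fun t => congrArg (Quotient.mk _) (t.restrict_restrict hAB)

theorem GType.restrict_trans {p q r : K.GType} {A B : Set U} (hAB : A ⊆ B)
    (hrq : r.restrict B = q) (hqp : q.restrict A = p) : r.restrict A = p := by
  rw [← r.restrict_restrict hAB, hrq, hqp]

end AEC

theorem statement10_general {L : FirstOrder.Language.{u, u}} {U : Type u} (K : AEC L U)
    (lam : Cardinal.{u})
    (M N : ModelOn L U) (h : K.le M N)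
    (p q : K.GType) (hp : K.IsLamUnique lam M p)
    (hq : K.IsTypeOver N q) (hqext : K.HasExtProp lam N q)
    (hres : q.restrict M.carrier = p) :
    K.IsLamUnique lam N q := by
  obtain ⟨-, -, hpuniq⟩ := hp
  refine ⟨hq, hqext, fun M' hNM' hcard q₁ q₂ ht₁ he₁ ht₂ he₂ hr₁ hr₂ => ?_⟩
  have hMN := K.subset_of_le h
  exact hpuniq M' (K.le_trans h hNM') hcard q₁ q₂ ht₁ he₁ ht₂ he₂
    (AEC.GType.restrict_trans hMN hr₁ hres)
    (AEC.GType.restrict_trans hMN hr₂ hres)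

/-- If `M ≤ N` are models in `K_λ`, `p ∈ S(M)` is a `λ`-unique type, and `q ∈ S(N)`
extends `p` and has the `λ`-extension property, then `q` is a `λ`-unique type over `N`. -/
theorem statement10 {L : FirstOrder.Language.{u, u}} {U : Type u} (K : AEC L U)
    (lam : Cardinal.{u}) (hLS : K.LS ≤ lam)
    (M N : ModelOn L U) (h : K.le M N)
    (hMcard : #(M.carrier) = lam) (hNcard : #(N.carrier) = lam)
    (p q : K.GType) (hp : K.IsLamUnique lam M p)
    (hq : K.IsTypeOver N q) (hqext : K.HasExtProp lam N q)
    (hres : q.restrict M.carrier = p) :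
    K.IsLamUnique lam N q :=
  statement10_general K lam M N h p q hp hq hqext hres
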